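/- arXiv:1507.08325 — 3 statements merged into one kernel-verified Lean document; each statement's English description precedes it below -/
import Mathlib

section
/- Let $B$ and $D$ be abelian groups and let $f\colon B\to D$ and $g\colon D\to B$ be group homomorphisms. Then the sequence $0 \to B[f]/g(D[f\circ g]) \to B/g(D) \xrightarrow{f} D/(f\circ g)(D) \to D/f(B) \to 0$ is exact, where $B[f]$ denotes the kernel of $f$, $D[f\circ g]$ denotes the kernel of $f\circ g$, and the maps are the natural ones induced by inclusion, by $f$, and by the quotient projection. -/
/-- Snake-lemma exact sequence for abelian groups `B`, `D` with homomorphisms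
`f : B → D`, `g : D → B`:
`0 → B[f]/g(D[fg]) → B/gD → D/fgD → D/fB → 0` is exact. -/
theorem snake_exact_sequence {B D : Type*} [AddCommGroup B] [AddCommGroup D]
    (f : B →+ D) (g : D →+ B) :
    Function.Injective
      (QuotientAddGroup.map
        (((AddMonoidHom.ker (f.comp g)).map g).addSubgroupOf f.ker)
        g.range f.ker.subtype
        (fun x hx => by
          rcases hx with ⟨d, _, hd⟩
          exact ⟨d, by simpa using hd⟩)) ∧
    Function.Exact
      (QuotientAddGroup.map
        (((AddMonoidHom.ker (f.comp g)).map g).addSubgroupOf f.ker)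
        g.range f.ker.subtype
        (fun x hx => by
          rcases hx with ⟨d, _, hd⟩
          exact ⟨d, by simpa using hd⟩))
      (QuotientAddGroup.map g.range (f.comp g).range f
        (fun x hx => by rcases hx with ⟨d, hd⟩; exact ⟨d, by simp [← hd]⟩)) ∧
    Function.Exact
      (QuotientAddGroup.map g.range (f.comp g).range f
        (fun x hx => by rcases hx with ⟨d, hd⟩; exact ⟨d, by simp [← hd]⟩))
      (QuotientAddGroup.map (f.comp g).range f.range (AddMonoidHom.id D)
        (fun x hx => by rcases hx with ⟨d, hd⟩; exact ⟨g d, by simpa using hd⟩)) ∧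
    Function.Surjective
      (QuotientAddGroup.map (f.comp g).range f.range (AddMonoidHom.id D)
        (fun x hx => by rcases hx with ⟨d, hd⟩; exact ⟨g d, by simpa using hd⟩)) := by

  refine ⟨?_, ?_, ?_, ?_⟩
  · rw [injective_iff_map_eq_zero]
    intro x hx
    induction x using QuotientAddGroup.induction_on with
    | H x =>
      rw [QuotientAddGroup.map_mk, QuotientAddGroup.eq_zero_iff] at hx
      rcases hx with ⟨d, hd⟩
      rw [QuotientAddGroup.eq_zero_iff, AddSubgroup.mem_addSubgroupOf]
      refine ⟨d, ?_, hd⟩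
      have : f (x : B) = 0 := x.2
      simp [AddMonoidHom.mem_ker, hd, this]
  · intro y
    induction y using QuotientAddGroup.induction_on with
    | H x =>
      constructor
      · intro h
        rw [QuotientAddGroup.map_mk, QuotientAddGroup.eq_zero_iff] at h
        rcases h with ⟨d, hd⟩
        refine ⟨((⟨x - g d, ?_⟩ : f.ker) : _ ⧸ _), ?_⟩
        · simp [AddMonoidHom.mem_ker, ← hd]
        · rw [QuotientAddGroup.map_mk, QuotientAddGroup.eq]
          exact ⟨d, by simp⟩
      · rintro ⟨z, hz⟩
        induction z using QuotientAddGroup.induction_on with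
        | H z =>
          rw [QuotientAddGroup.map_mk] at hz
          rw [← hz, QuotientAddGroup.map_mk, QuotientAddGroup.eq_zero_iff]
          exact ⟨0, by simpa using (z.2 : f (z:B) = 0).symm⟩
  · intro y
    induction y using QuotientAddGroup.induction_on with
    | H x =>
      constructor
      · intro h
        rw [QuotientAddGroup.map_mk, QuotientAddGroup.eq_zero_iff] at h
        rcases h with ⟨b, hb⟩
        refine ⟨(b : _ ⧸ g.range), ?_⟩
        rw [QuotientAddGroup.map_mk, QuotientAddGroup.eq]
        exact ⟨0, by simp [hb]⟩
      · rintro ⟨z, hz⟩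
        induction z using QuotientAddGroup.induction_on with
        | H z =>
          rw [QuotientAddGroup.map_mk] at hz
          rw [← hz, QuotientAddGroup.map_mk, QuotientAddGroup.eq_zero_iff]
          exact ⟨z, rfl⟩
  · intro y
    induction y using QuotientAddGroup.induction_on with
    | H x => exact ⟨(x : _ ⧸ _), by rw [QuotientAddGroup.map_mk]; rfl⟩
end

section
/- Let $B$ be an abelian group and $\phi\colon B\to B$ an endomorphism. For every $n\geq 1$ there is an exact sequence $0 \to B[\phi^n]/\phi(B[\phi^{n+1}]) \to B/\phi B \xrightarrow{\phi^n} B/\phi^{n+1}B \to B/\phi^n B \to 0$. -/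
/-!
Write `φ^(n+1) = ψ ∘ φ` with `ψ = φ^n`; the sequence exists for any composable pair
`A →φ B →ψ C` of abelian group maps. Its two substantive points are that
`ker ψ ∩ φ A = φ (ker (ψ ∘ φ))`, which gives injectivity, and that
`ψ b ∈ ψ (φ A)` exactly when `b ∈ ker ψ + φ A`, which gives exactness at `B/φA`.
-/

open QuotientAddGroup

namespace AddMonoidHom

-- The composite is a separate `χ` with `h : ψ.comp φ = χ`, so that it can be `φ ^ (n + 1)`
-- on the nose rather than `(φ ^ n).comp φ`, which Lean does not unify with it.
variable {A B C : Type*} [AddCommGroup A] [AddCommGroup B] [AddCommGroup C]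
  {φ : A →+ B} {ψ : B →+ C} {χ : A →+ C}

variable (φ ψ χ) in
def kerToCokerOfComp : ker ψ ⧸ ((ker χ).map φ).addSubgroupOf (ker ψ) →+ B ⧸ φ.range :=
  map _ _ (ker ψ).subtype fun _ ⟨a, _, ha⟩ => ⟨a, ha⟩

def cokerMapOfComp (h : ψ.comp φ = χ) : B ⧸ φ.range →+ C ⧸ χ.range :=
  map _ _ ψ fun _ ⟨a, ha⟩ => ⟨a, by simp [← h, ← ha]⟩

def cokerProjOfComp (h : ψ.comp φ = χ) : C ⧸ χ.range →+ C ⧸ ψ.range :=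
  map _ _ (AddMonoidHom.id C) fun _ ⟨a, ha⟩ => ⟨φ a, by simp [← h, ← ha]⟩

theorem injective_kerToCokerOfComp (h : ψ.comp φ = χ) :
    Function.Injective (kerToCokerOfComp φ ψ χ) := by
  refine (injective_iff_map_eq_zero _).2 fun x hx => ?_
  induction x using QuotientAddGroup.induction_on with
  | H x =>
    obtain ⟨a, ha⟩ := (eq_zero_iff _).1 hx
    refine (eq_zero_iff _).2 ⟨a, ?_, ha⟩
    change χ a = 0
    rw [← h, comp_apply, ha]
    exact x.2

theorem exact_kerToCokerOfComp_cokerMapOfComp (h : ψ.comp φ = χ) :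
    Function.Exact (kerToCokerOfComp φ ψ χ) (cokerMapOfComp h) := by
  intro y
  induction y using QuotientAddGroup.induction_on with
  | H b =>
    change (ψ b : C ⧸ χ.range) = 0 ↔ _
    rw [eq_zero_iff]
    constructor
    · rintro ⟨a, ha⟩
      have hb : b - φ a ∈ ker ψ := by simp [mem_ker, ← ha, ← h]
      refine ⟨QuotientAddGroup.mk ⟨b - φ a, hb⟩, (eq_iff_sub_mem ..).2 ?_⟩
      simp
    · rintro ⟨x, hx⟩
      induction x using QuotientAddGroup.induction_on with
      | H x =>
        obtain ⟨a, ha⟩ := (QuotientAddGroup.eq ..).1 hx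
        refine ⟨a, ?_⟩
        have hψx : ψ x = 0 := x.2
        rw [← h, comp_apply, ha]
        simp [hψx]

theorem exact_cokerMapOfComp_cokerProjOfComp (h : ψ.comp φ = χ) :
    Function.Exact (cokerMapOfComp h) (cokerProjOfComp h) := by
  intro y
  induction y using QuotientAddGroup.induction_on with
  | H c =>
    change (c : C ⧸ ψ.range) = 0 ↔ _
    rw [eq_zero_iff]
    constructor
    · rintro ⟨b, rfl⟩
      exact ⟨b, rfl⟩
    · rintro ⟨y, hy⟩
      induction y using QuotientAddGroup.induction_on with
      | H b =>
        obtain ⟨a, ha⟩ := (QuotientAddGroup.eq ..).1 hy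
        refine ⟨b + φ a, ?_⟩
        rw [map_add, ← comp_apply, h, ha]
        abel

theorem surjective_cokerProjOfComp (h : ψ.comp φ = χ) :
    Function.Surjective (cokerProjOfComp h) :=
  map_surjective_of_surjective _ _ _ mk_surjective _

end AddMonoidHom

/-- For an endomorphism `φ` of an abelian group `B` and `n ≥ 1`, the sequence
`0 → B[φ^n]/φ(B[φ^(n+1)]) → B/φB → B/φ^(n+1)B → B/φ^nB → 0` is exact. -/
theorem phi_power_exact_sequence {B : Type*} [AddCommGroup B]
    (φ : AddMonoid.End B) (n : ℕ) :
    Function.Injective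
      (QuotientAddGroup.map
        (((AddMonoidHom.ker (φ ^ (n + 1) : AddMonoid.End B)).map (φ : B →+ B)).addSubgroupOf
          (AddMonoidHom.ker (φ ^ n : AddMonoid.End B)))
        (φ : B →+ B).range (AddMonoidHom.ker (φ ^ n : AddMonoid.End B)).subtype
        (fun x hx => by
          rcases hx with ⟨b, _, hb⟩
          exact ⟨b, by simpa using hb⟩)) ∧
    Function.Exact
      (QuotientAddGroup.map
        (((AddMonoidHom.ker (φ ^ (n + 1) : AddMonoid.End B)).map (φ : B →+ B)).addSubgroupOf
          (AddMonoidHom.ker (φ ^ n : AddMonoid.End B)))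
        (φ : B →+ B).range (AddMonoidHom.ker (φ ^ n : AddMonoid.End B)).subtype
        (fun x hx => by
          rcases hx with ⟨b, _, hb⟩
          exact ⟨b, by simpa using hb⟩))
      (QuotientAddGroup.map (φ : B →+ B).range ((φ ^ (n + 1) : AddMonoid.End B) : B →+ B).range
        ((φ ^ n : AddMonoid.End B) : B →+ B)
        (fun x hx => by
          rcases hx with ⟨b, hb⟩
          refine ⟨b, ?_⟩
          subst hb
          show (φ ^ (n + 1)) b = (φ ^ n) (φ b)
          rw [pow_succ]
          rfl)) ∧
    Function.Exact
      (QuotientAddGroup.map (φ : B →+ B).range ((φ ^ (n + 1) : AddMonoid.End B) : B →+ B).range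
        ((φ ^ n : AddMonoid.End B) : B →+ B)
        (fun x hx => by
          rcases hx with ⟨b, hb⟩
          refine ⟨b, ?_⟩
          subst hb
          show (φ ^ (n + 1)) b = (φ ^ n) (φ b)
          rw [pow_succ]
          rfl))
      (QuotientAddGroup.map ((φ ^ (n + 1) : AddMonoid.End B) : B →+ B).range
        ((φ ^ n : AddMonoid.End B) : B →+ B).range (AddMonoidHom.id B)
        (fun x hx => by
          rcases hx with ⟨b, hb⟩
          refine ⟨φ b, ?_⟩
          subst hb
          show (φ ^ n) (φ b) = (φ ^ (n + 1)) b
          rw [pow_succ]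
          rfl)) ∧
    Function.Surjective
      (QuotientAddGroup.map ((φ ^ (n + 1) : AddMonoid.End B) : B →+ B).range
        ((φ ^ n : AddMonoid.End B) : B →+ B).range (AddMonoidHom.id B)
        (fun x hx => by
          rcases hx with ⟨b, hb⟩
          refine ⟨φ b, ?_⟩
          subst hb
          show (φ ^ n) (φ b) = (φ ^ (n + 1)) b
          rw [pow_succ]
          rfl)) := by
  have h : (φ ^ n).comp φ = φ ^ (n + 1) := (pow_succ φ n).symm
  exact ⟨AddMonoidHom.injective_kerToCokerOfComp h,
    AddMonoidHom.exact_kerToCokerOfComp_cokerMapOfComp h,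
    AddMonoidHom.exact_cokerMapOfComp_cokerProjOfComp h,
    AddMonoidHom.surjective_cokerProjOfComp h⟩
end

section
/- Let $\phi\colon B\to B$ be an endomorphism of an abelian group $B$ such that for every $n$, the quotients $B/\phi^n B$ and kernels $B[\phi^n]$ are finite $p$-groups viewed as $\mathbb{F}_p$-vector spaces when of exponent $p$. Suppose $\phi^{p-1} = p\cdot u$ for an automorphism $u$ of $B$. Then $\dim_{\mathbb{F}_p} B/pB - \dim_{\mathbb{F}_p} B[p] = (p-1)\left(\dim_{\mathbb{F}_p} B/\phi B - \dim_{\mathbb{F}_p} B[\phi]\right)$, provided $B/\phi B$ and $B[\phi]$ are elementary abelian $p$-groups and all the groups appearing are finite. -/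
/-!
The ratio `χ(f) = #coker f / #ker f` is multiplicative on composites of maps with finite
kernels, since `#ker (g ∘ f) = #ker f · #(im f ∩ ker g)` and
`#coker (g ∘ f) · [ker g : im f ∩ ker g] = #coker g · #coker f`. Hence
`χ(φ)^(p-1) = χ(φ^(p-1)) = χ(p ∘ u) = χ(p) · χ(u) = χ(p)`, i.e. `p^((c-d)(p-1)) = p^(a-b)`.
-/

open AddSubgroup

theorem AddSubgroup.card_inf_mul_relIndex {G : Type*} [AddGroup G] (H K : AddSubgroup G) :
    Nat.card ↥(H ⊓ K) * H.relIndex K = Nat.card K := by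
  rw [← inf_relIndex_right, ← Nat.card_congr (addSubgroupOfEquivOfLe inf_le_right).toEquiv]
  exact card_mul_index _

namespace AddMonoidHom

variable {A B C : Type*} [AddCommGroup A] [AddCommGroup B] [AddCommGroup C]
  (f : A →+ B) (g : B →+ C)

theorem index_range_comp_mul_relIndex :
    (g.comp f).range.index * f.range.relIndex g.ker = g.range.index * f.range.index := by
  rw [range_comp, index_map, ← relIndex_sup_left,
    ← relIndex_mul_index (le_sup_left : f.range ≤ f.range ⊔ g.ker)]
  ring

theorem card_ker_comp :
    Nat.card (g.comp f).ker = Nat.card f.ker * Nat.card ↥(f.range ⊓ g.ker) := by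
  have hle : f.ker ≤ (g.comp f).ker := fun x hx => by simp [mem_ker.1 hx]
  rw [← card_mul_index (f.ker.addSubgroupOf (g.comp f).ker),
    Nat.card_congr (addSubgroupOfEquivOfLe hle).toEquiv]
  change _ * f.ker.relIndex _ = _
  rw [relIndex_ker, ← comap_ker, map_comap_eq]

theorem card_ker_comp_ne_zero (hf : Nat.card f.ker ≠ 0) (hg : Nat.card g.ker ≠ 0) :
    Nat.card (g.comp f).ker ≠ 0 := by
  have := Nat.finite_of_card_ne_zero hg
  have : Finite ↥(f.range ⊓ g.ker) := Finite.of_injective _ (inclusion_injective inf_le_right)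
  rw [card_ker_comp]
  exact mul_ne_zero hf Nat.card_pos.ne'

theorem index_range_comp_mul_card_ker :
    (g.comp f).range.index * Nat.card f.ker * Nat.card g.ker
      = g.range.index * f.range.index * Nat.card (g.comp f).ker := by
  rw [card_ker_comp, ← card_inf_mul_relIndex f.range g.ker, ← index_range_comp_mul_relIndex]
  ring

theorem card_ker_of_injective (hf : Function.Injective f) : Nat.card f.ker = 1 := by
  rw [(ker_eq_bot_iff f).2 hf, card_bot]

/-- Zero when the kernel or the cokernel of `f` is infinite. -/
noncomputable def eulerChar : ℚ := f.range.index / Nat.card f.ker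

theorem eulerChar_comp (hf : Nat.card f.ker ≠ 0) (hg : Nat.card g.ker ≠ 0) :
    eulerChar (g.comp f) = eulerChar g * eulerChar f := by
  have hgf := card_ker_comp_ne_zero f g hf hg
  have h := congrArg (Nat.cast : ℕ → ℚ) (index_range_comp_mul_card_ker f g)
  push_cast at h
  rw [eulerChar, eulerChar, eulerChar, div_mul_div_comm,
    div_eq_div_iff (by exact_mod_cast hgf) (by exact_mod_cast mul_ne_zero hg hf)]
  linear_combination h

theorem eulerChar_of_bijective (hf : Function.Bijective f) : eulerChar f = 1 := by
  rw [eulerChar, range_eq_top.2 hf.2, card_ker_of_injective f hf.1, index_top]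
  norm_num

theorem eulerChar_eq_zpow {q m n : ℕ} (hq : q ≠ 0) (hm : f.range.index = q ^ m)
    (hn : Nat.card f.ker = q ^ n) : eulerChar f = (q : ℚ) ^ ((m : ℤ) - n) := by
  rw [eulerChar, hm, hn, zpow_sub₀ (by exact_mod_cast hq)]
  norm_cast

end AddMonoidHom

namespace AddMonoid.End

open AddMonoidHom

variable {B : Type*} [AddCommGroup B]

theorem bijective_units (u : (AddMonoid.End B)ˣ) : Function.Bijective (u : B →+ B) :=
  Function.bijective_iff_has_inverse.2
    ⟨(u⁻¹ : (AddMonoid.End B)ˣ), fun x => DFunLike.congr_fun u.inv_mul x,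
      fun x => DFunLike.congr_fun u.mul_inv x⟩

theorem card_ker_pow_ne_zero (φ : AddMonoid.End B) (hφ : Nat.card (φ : B →+ B).ker ≠ 0)
    (n : ℕ) : Nat.card ((φ ^ n : AddMonoid.End B) : B →+ B).ker ≠ 0 := by
  induction n with
  | zero =>
    rw [pow_zero, card_ker_of_injective (1 : AddMonoid.End B) Function.injective_id]
    exact one_ne_zero
  | succ n ih => rw [pow_succ]; exact card_ker_comp_ne_zero _ _ hφ ih

theorem eulerChar_pow (φ : AddMonoid.End B) (hφ : Nat.card (φ : B →+ B).ker ≠ 0) (n : ℕ) :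
    eulerChar ((φ ^ n : AddMonoid.End B) : B →+ B) = eulerChar (φ : B →+ B) ^ n := by
  induction n with
  | zero => rw [pow_zero, pow_zero]; exact eulerChar_of_bijective _ Function.bijective_id
  | succ n ih =>
    rw [pow_succ, pow_succ, ← ih]
    exact eulerChar_comp _ _ hφ (card_ker_pow_ne_zero φ hφ n)

end AddMonoid.End

open AddMonoidHom AddMonoid.End

theorem dim_p_descent_general {B : Type*} [AddCommGroup B] (p : ℕ) (hp : p.Prime)
    (φ : AddMonoid.End B) (u : (AddMonoid.End B)ˣ)
    (hu : φ ^ (p - 1) = (p : AddMonoid.End B) * (u : AddMonoid.End B))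
    (a b c d : ℕ)
    (ha : Nat.card (B ⧸ (zsmulAddGroupHom (p : ℤ) : B →+ B).range) = p ^ a)
    (hb : Nat.card (zsmulAddGroupHom (p : ℤ) : B →+ B).ker = p ^ b)
    (hc : Nat.card (B ⧸ (φ : B →+ B).range) = p ^ c)
    (hd : Nat.card (AddMonoidHom.ker (φ : B →+ B)) = p ^ d) :
    (a : ℤ) - b = (p - 1) * ((c : ℤ) - d) := by
  have hφ : Nat.card (φ : B →+ B).ker ≠ 0 := by rw [hd]; exact pow_ne_zero _ hp.ne_zero
  have hpu : ((φ ^ (p - 1) : AddMonoid.End B) : B →+ B)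
      = (zsmulAddGroupHom (p : ℤ) : B →+ B).comp (u : B →+ B) := by
    rw [hu]
    ext x
    exact (AddMonoid.End.natCast_apply p _).trans (natCast_zsmul _ p).symm
  have key : ((p : ℚ) ^ ((c : ℤ) - d)) ^ (p - 1) = (p : ℚ) ^ ((a : ℤ) - b) := by
    rw [← eulerChar_eq_zpow _ hp.ne_zero hc hd, ← eulerChar_pow φ hφ, hpu,
      eulerChar_comp _ _
        (by rw [card_ker_of_injective _ (bijective_units u).1]; exact one_ne_zero)
        (by rw [hb]; exact pow_ne_zero _ hp.ne_zero),
      eulerChar_of_bijective _ (bijective_units u), mul_one,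
      eulerChar_eq_zpow _ hp.ne_zero ha hb]
  rw [← zpow_natCast, ← zpow_mul] at key
  have := zpow_right_injective₀ (by exact_mod_cast hp.pos) (by exact_mod_cast hp.ne_one) key
  push_cast [Nat.cast_sub hp.one_le] at this
  linarith

/-- Let `φ` be an endomorphism of an abelian group `B` with `φ^(p-1) = p·u` for an
automorphism `u`, such that all groups `B/φ^iB` and `B[φ^i]` are finite, and
`B/φB`, `B[φ]` (and `B/pB`, `B[p]`) are elementary abelian `p`-groups with
`#(B/pB) = p^a`, `#B[p] = p^b`, `#(B/φB) = p^c`, `#B[φ] = p^d`.  Then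
`a - b = (p-1)(c - d)`. -/
theorem dim_p_descent {B : Type*} [AddCommGroup B] (p : ℕ) (hp : p.Prime)
    (φ : AddMonoid.End B) (u : (AddMonoid.End B)ˣ)
    (hu : φ ^ (p - 1) = (p : AddMonoid.End B) * (u : AddMonoid.End B))
    (hfinQ : ∀ i : ℕ, Finite (B ⧸ ((φ ^ i : AddMonoid.End B) : B →+ B).range))
    (hfinK : ∀ i : ℕ, Finite (AddMonoidHom.ker ((φ ^ i : AddMonoid.End B) : B →+ B)))
    (a b c d : ℕ)
    (ha : Nat.card (B ⧸ (zsmulAddGroupHom (p : ℤ) : B →+ B).range) = p ^ a)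
    (hb : Nat.card (zsmulAddGroupHom (p : ℤ) : B →+ B).ker = p ^ b)
    (hc : Nat.card (B ⧸ (φ : B →+ B).range) = p ^ c)
    (hd : Nat.card (AddMonoidHom.ker (φ : B →+ B)) = p ^ d)
    (hpc : ∀ x : B ⧸ (φ : B →+ B).range, p • x = 0)
    (hpd : ∀ x : AddMonoidHom.ker (φ : B →+ B), p • x = 0) :
    (a : ℤ) - b = (p - 1) * ((c : ℤ) - d) :=
  dim_p_descent_general p hp φ u hu a b c d ha hb hc hd
end
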